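/- arXiv:2405.08646 — 6 statements merged into one kernel-verified Lean document; each statement's English description precedes it below -/
import Mathlib

section
/- If two involutive permutations v, w of {1,…,n} satisfy r_{ij}(v) = r_{ij}(w) for all 1 ≤ i < j ≤ n, then v = w. -/
/-- `rij w i j` is the number of 2-cycles (arcs) of `w` entirely contained in
the interval `[i, j]`. -/
def rij {n : ℕ} (w : Equiv.Perm (Fin n)) (i j : Fin n) : ℕ :=
  (Finset.univ.filter (fun p : Fin n × Fin n =>
    i ≤ p.1 ∧ p.1 < p.2 ∧ p.2 ≤ j ∧ w p.1 = p.2)).card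

lemma rij_key {n : ℕ} (v : Equiv.Perm (Fin n)) (i j i' j' : Fin n)
    (hij : i < j) (hi' : (i' : ℕ) = (i : ℕ) + 1) (hj' : (j' : ℕ) = (j : ℕ) - 1) :
    rij v i' j + rij v i j' + (if v i = j then 1 else 0)
      = rij v i j + rij v i' j' := by
  classical
  have hijn : (i : ℕ) < (j : ℕ) := hij
  set A : Finset (Fin n × Fin n) := Finset.univ.filter (fun p : Fin n × Fin n =>
    i ≤ p.1 ∧ p.1 < p.2 ∧ p.2 ≤ j ∧ v p.1 = p.2) with hA
  set A1 : Finset (Fin n × Fin n) := Finset.univ.filter (fun p : Fin n × Fin n =>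
    i' ≤ p.1 ∧ p.1 < p.2 ∧ p.2 ≤ j ∧ v p.1 = p.2) with hA1
  set A2 : Finset (Fin n × Fin n) := Finset.univ.filter (fun p : Fin n × Fin n =>
    i ≤ p.1 ∧ p.1 < p.2 ∧ p.2 ≤ j' ∧ v p.1 = p.2) with hA2
  set A12 : Finset (Fin n × Fin n) := Finset.univ.filter (fun p : Fin n × Fin n =>
    i' ≤ p.1 ∧ p.1 < p.2 ∧ p.2 ≤ j' ∧ v p.1 = p.2) with hA12
  have hunion : A1 ∪ A2 = A.erase (i, j) := by
    ext p
    constructor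
    · intro hp
      rcases Finset.mem_union.1 hp with h' | h'
      · obtain ⟨-, h1, h2, h3, h4⟩ := Finset.mem_filter.1 h'
        have h1n : (i' : ℕ) ≤ (p.1 : ℕ) := h1
        refine Finset.mem_erase.2 ⟨?_, Finset.mem_filter.2
          ⟨Finset.mem_univ _, Fin.le_def.2 (by omega), h2, h3, h4⟩⟩
        intro e
        have e1 : (p.1 : ℕ) = (i : ℕ) := by rw [e]
        omega
      · obtain ⟨-, h1, h2, h3, h4⟩ := Finset.mem_filter.1 h'
        have h3n : (p.2 : ℕ) ≤ (j' : ℕ) := h3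
        refine Finset.mem_erase.2 ⟨?_, Finset.mem_filter.2
          ⟨Finset.mem_univ _, h1, h2, Fin.le_def.2 (by omega), h4⟩⟩
        intro e
        have e2 : (p.2 : ℕ) = (j : ℕ) := by rw [e]
        omega
    · intro hp
      obtain ⟨hne, hmem⟩ := Finset.mem_erase.1 hp
      obtain ⟨-, h1, h2, h3, h4⟩ := Finset.mem_filter.1 hmem
      have h1n : (i : ℕ) ≤ (p.1 : ℕ) := h1
      have h3n : (p.2 : ℕ) ≤ (j : ℕ) := h3
      by_cases hc : (p.1 : ℕ) = (i : ℕ)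
      · have hp1 : p.1 = i := Fin.ext hc
        have hp2 : p.2 ≠ j := fun e => hne (Prod.ext hp1 e)
        have hp2n : (p.2 : ℕ) ≠ (j : ℕ) := fun e => hp2 (Fin.ext e)
        exact Finset.mem_union.2 (Or.inr (Finset.mem_filter.2
          ⟨Finset.mem_univ _, h1, h2, Fin.le_def.2 (by omega), h4⟩))
      · exact Finset.mem_union.2 (Or.inl (Finset.mem_filter.2
          ⟨Finset.mem_univ _, Fin.le_def.2 (by omega), h2, h3, h4⟩))
  have hinter : A1 ∩ A2 = A12 := by
    ext p
    simp only [hA1, hA2, hA12, Finset.mem_inter, Finset.mem_filter, Finset.mem_univ, true_and]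
    constructor
    · rintro ⟨⟨h1, h2, h3, h4⟩, ⟨h5, h6, h7, h8⟩⟩
      exact ⟨h1, h2, h7, h4⟩
    · rintro ⟨h1, h2, h3, h4⟩
      have h1n : (i' : ℕ) ≤ (p.1 : ℕ) := h1
      have h3n : (p.2 : ℕ) ≤ (j' : ℕ) := h3
      exact ⟨⟨h1, h2, Fin.le_def.2 (by omega), h4⟩,
        ⟨Fin.le_def.2 (by omega), h2, h3, h4⟩⟩
  have hcards : (A1 ∪ A2).card + (A1 ∩ A2).card = A1.card + A2.card :=
    Finset.card_union_add_card_inter A1 A2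
  rw [hunion, hinter] at hcards
  have hmem : (i, j) ∈ A ↔ v i = j := by
    simp [hA, hij, le_refl]
  have herase : (A.erase (i, j)).card + (if v i = j then 1 else 0) = A.card := by
    by_cases hvij : v i = j
    · rw [if_pos hvij]
      exact Finset.card_erase_add_one (hmem.2 hvij)
    · rw [if_neg hvij, Finset.erase_eq_of_notMem (fun hc => hvij (hmem.1 hc)), add_zero]
  show A1.card + A2.card + _ = A.card + A12.card
  omega

/-- The numbers `r_{ij}` determine an involution. -/
theorem involution_eq_of_rij_eq (n : ℕ) (v w : Equiv.Perm (Fin n))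
    (hv : Function.Involutive v) (hw : Function.Involutive w)
    (h : ∀ i j : Fin n, i < j → rij v i j = rij w i j) :
    v = w := by
  classical
  have hall : ∀ a b : Fin n, rij v a b = rij w a b := by
    intro a b
    by_cases hab : a < b
    · exact h a b hab
    · have hz : ∀ u : Equiv.Perm (Fin n), rij u a b = 0 := by
        intro u
        apply Finset.card_eq_zero.2
        rw [Finset.filter_eq_empty_iff]
        rintro p _ ⟨h1, h2, h3, _⟩
        have e1 : (a : ℕ) ≤ p.1 := h1
        have e2 : (p.1 : ℕ) < p.2 := h2
        have e3 : (p.2 : ℕ) ≤ b := h3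
        have e4 : ¬ ((a : ℕ) < (b : ℕ)) := hab
        omega
      rw [hz v, hz w]
  have harc : ∀ i j : Fin n, i < j → (v i = j ↔ w i = j) := by
    intro i j hij
    have hijn : (i : ℕ) < (j : ℕ) := hij
    have hjn : (j : ℕ) < n := j.isLt
    have kv := rij_key v i j ⟨(i : ℕ) + 1, by omega⟩ ⟨(j : ℕ) - 1, by omega⟩ hij rfl rfl
    have kw := rij_key w i j ⟨(i : ℕ) + 1, by omega⟩ ⟨(j : ℕ) - 1, by omega⟩ hij rfl rfl
    rw [hall, hall, hall, hall] at kv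
    have heq : (if v i = j then 1 else 0 : ℕ) = (if w i = j then 1 else 0) := by omega
    by_cases h1 : v i = j <;> by_cases h2 : w i = j <;> simp [h1, h2] at heq ⊢
  apply Equiv.ext
  intro x
  rcases lt_trichotomy x (v x) with hxy | hxy | hxy
  · exact ((harc x (v x) hxy).1 rfl).symm
  · by_contra hne
    have hvx : v x = x := hxy.symm
    rcases lt_trichotomy x (w x) with h1 | h1 | h1
    · have := (harc x (w x) h1).2 rfl
      rw [hvx] at this
      exact absurd this (ne_of_lt h1)
    · exact hne (by rw [hvx, ← h1])
    · have := (harc (w x) x h1).2 (hw x)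
      have hwx : v x = w x := by
        have h2 := congrArg v this
        rw [hv] at h2
        exact h2.symm
      rw [hvx] at hwx
      exact absurd hwx.symm (ne_of_lt h1)
  · have := (harc (v x) x hxy).1 (hv x)
    have h2 := congrArg w this
    rw [hw] at h2
    exact h2
end

section
/- The rank-comparison relation on involutions, defined by v ≤ w iff r_{ij}(v) ≤ r_{ij}(w) for all i < j, is a partial order on the set of involutions of {1,…,n}. -/
/-- The rank-comparison relation: `v ≤ w` iff `r_{ij}(v) ≤ r_{ij}(w)` for all
`i < j`. -/
def rankLe {n : ℕ} (v w : Equiv.Perm (Fin n)) : Prop :=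
  ∀ i j : Fin n, i < j → rij v i j ≤ rij w i j

/-- Natural-number-indexed version of the arc-counting set. -/
def Sset {n : ℕ} (v : Equiv.Perm (Fin n)) (a b : ℕ) : Finset (Fin n × Fin n) :=
  Finset.univ.filter (fun p : Fin n × Fin n =>
    a ≤ p.1.val ∧ p.1 < p.2 ∧ p.2.val ≤ b ∧ v p.1 = p.2)

lemma rij_eq_Sset {n : ℕ} (v : Equiv.Perm (Fin n)) (i j : Fin n) :
    rij v i j = (Sset v i.val j.val).card := by
  rfl

lemma Sset_card_eq {n : ℕ} (v w : Equiv.Perm (Fin n))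
    (hvw : rankLe v w) (hwv : rankLe w v) (a b : ℕ) :
    (Sset v a b).card = (Sset w a b).card := by
  by_cases hab : a < b
  · -- clamp b to min b (n-1)
    rcases Nat.eq_zero_or_pos n with hn | hn
    · subst hn
      have : ∀ (u : Equiv.Perm (Fin 0)), Sset u a b = ∅ := by
        intro u; apply Finset.eq_empty_of_forall_notMem; intro p; exact p.1.elim0
      rw [this, this]
    have hb' : ∀ (u : Equiv.Perm (Fin n)), Sset u a b = Sset u a (min b (n-1)) := by
      intro u
      unfold Sset
      apply Finset.filter_congr
      intro p _
      have := p.2.isLt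
      constructor <;> rintro ⟨h1, h2, h3, h4⟩ <;> exact ⟨h1, h2, by omega, h4⟩
    rw [hb' v, hb' w]
    set b' := min b (n-1) with hb'def
    have hb'n : b' < n := by omega
    by_cases hab' : a < b'
    · have han : a < n := by omega
      have h1 := hvw ⟨a, han⟩ ⟨b', hb'n⟩ (by simp [Fin.lt_def]; omega)
      have h2 := hwv ⟨a, han⟩ ⟨b', hb'n⟩ (by simp [Fin.lt_def]; omega)
      rw [rij_eq_Sset, rij_eq_Sset] at h1 h2
      simp only [Fin.val_mk] at h1 h2
      omega
    · have : ∀ (u : Equiv.Perm (Fin n)), Sset u a b' = ∅ := by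
        intro u
        apply Finset.eq_empty_of_forall_notMem
        intro p hp
        simp only [Sset, Finset.mem_filter, Fin.lt_def] at hp
        omega
      rw [this v, this w]
  · have : ∀ (u : Equiv.Perm (Fin n)), Sset u a b = ∅ := by
      intro u
      apply Finset.eq_empty_of_forall_notMem
      intro p hp
      simp only [Sset, Finset.mem_filter, Fin.lt_def] at hp
      omega
    rw [this v, this w]

/-- The set of arcs exactly equal to `(x, y)`. -/
def Tset {n : ℕ} (v : Equiv.Perm (Fin n)) (x y : Fin n) : Finset (Fin n × Fin n) :=
  Finset.univ.filter (fun p : Fin n × Fin n => p.1 = x ∧ p.2 = y ∧ v p.1 = p.2)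

lemma Tset_card {n : ℕ} (v : Equiv.Perm (Fin n)) (x y : Fin n) :
    (Tset v x y).card = if v x = y then 1 else 0 := by
  have : Tset v x y = if v x = y then {(x, y)} else ∅ := by
    split_ifs with h
    · ext p
      simp only [Tset, Finset.mem_filter, Finset.mem_univ, true_and, Finset.mem_singleton,
        Prod.ext_iff]
      constructor
      · rintro ⟨h1, h2, _⟩; exact ⟨h1, h2⟩
      · rintro ⟨h1, h2⟩; exact ⟨h1, h2, by rw [h1, h2, h]⟩
    · apply Finset.eq_empty_of_forall_notMem
      intro p hp
      simp only [Tset, Finset.mem_filter] at hp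
      obtain ⟨_, h1, h2, h3⟩ := hp
      exact h (by rw [← h1, h3, h2])
  rw [this]
  split_ifs <;> simp

/-- Inclusion–exclusion decomposition. -/
lemma Sset_decomp {n : ℕ} (v : Equiv.Perm (Fin n)) (x y : Fin n) (hxy : x < y) :
    (Sset v x.val y.val).card + (Sset v (x.val + 1) (y.val - 1)).card =
    (Sset v (x.val + 1) y.val).card + (Sset v x.val (y.val - 1)).card
      + (Tset v x y).card := by
  set a := x.val
  set b := y.val
  have hab : a < b := hxy
  have hsplit : Sset v a b = (Sset v (a+1) b ∪ Sset v a (b-1)) ∪ Tset v x y := by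
    ext p
    by_cases hP : v p.1 = p.2
    · simp only [Sset, Tset, Finset.mem_union, Finset.mem_filter, Finset.mem_univ, true_and,
        Fin.lt_def, hP, and_true, Fin.ext_iff]
      omega
    · simp [Sset, Tset, hP]
  have hdisj : Disjoint (Sset v (a+1) b ∪ Sset v a (b-1)) (Tset v x y) := by
    rw [Finset.disjoint_left]
    intro p hp hpT
    simp only [Sset, Finset.mem_union, Finset.mem_filter, Fin.lt_def] at hp
    simp only [Tset, Finset.mem_filter, Fin.ext_iff] at hpT
    obtain ⟨_, h1, h2, _⟩ := hpT
    rcases hp with ⟨_, h, _⟩ | ⟨_, _, _, h, _⟩ <;> omega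
  have hinter : Sset v (a+1) b ∩ Sset v a (b-1) = Sset v (a+1) (b-1) := by
    ext p
    simp only [Sset, Finset.mem_inter, Finset.mem_filter, Finset.mem_univ, true_and]
    constructor
    · rintro ⟨⟨h1, h2, h3, h4⟩, ⟨h5, h6, h7, h8⟩⟩; exact ⟨h1, h2, h7, h4⟩
    · rintro ⟨h1, h2, h3, h4⟩; exact ⟨⟨h1, h2, by omega, h4⟩, ⟨by omega, h2, h3, h4⟩⟩
  have hcu := Finset.card_union_add_card_inter (Sset v (a+1) b) (Sset v a (b-1))
  rw [hinter] at hcu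
  rw [hsplit, Finset.card_union_of_disjoint hdisj]
  omega

lemma arc_iff {n : ℕ} (v w : Equiv.Perm (Fin n))
    (hvw : rankLe v w) (hwv : rankLe w v) (x y : Fin n) (hxy : x < y) :
    v x = y ↔ w x = y := by
  have hv := Sset_decomp v x y hxy
  have hw := Sset_decomp w x y hxy
  have e1 := Sset_card_eq v w hvw hwv x.val y.val
  have e2 := Sset_card_eq v w hvw hwv (x.val + 1) (y.val - 1)
  have e3 := Sset_card_eq v w hvw hwv (x.val + 1) y.val
  have e4 := Sset_card_eq v w hvw hwv x.val (y.val - 1)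
  have hT : (Tset v x y).card = (Tset w x y).card := by omega
  rw [Tset_card, Tset_card] at hT
  split_ifs at hT with h1 h2 h2 <;> simp_all

/-- The rank-comparison relation is a partial order on involutions: it is
reflexive, transitive, and antisymmetric. -/
theorem rankLe_partial_order (n : ℕ) :
    (∀ v : Equiv.Perm (Fin n), Function.Involutive v → rankLe v v) ∧
    (∀ u v w : Equiv.Perm (Fin n), Function.Involutive u → Function.Involutive v →
      Function.Involutive w → rankLe u v → rankLe v w → rankLe u w) ∧
    (∀ v w : Equiv.Perm (Fin n), Function.Involutive v → Function.Involutive w →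
      rankLe v w → rankLe w v → v = w) := by
  refine ⟨fun v _ i j _ => le_refl _,
    fun u v w _ _ _ h1 h2 i j hij => le_trans (h1 i j hij) (h2 i j hij), ?_⟩
  intro v w hv hw hvw hwv
  have key : ∀ x y : Fin n, x < y → (v x = y ↔ w x = y) :=
    fun x y hxy => arc_iff v w hvw hwv x y hxy
  apply Equiv.ext
  intro x
  rcases lt_trichotomy (v x) x with h | h | h
  · have h2 : w (v x) = x := (key (v x) x h).mp (hv x)
    calc v x = w (w (v x)) := (hw (v x)).symm
      _ = w x := by rw [h2]
  · rcases lt_trichotomy (w x) x with h' | h' | h'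
    · have h2 : v (w x) = x := (key (w x) x h').mpr (hw x)
      have t := hv (w x)
      rwa [h2] at t
    · rw [h, h']
    · exact (key x (w x) h').mpr rfl
  · exact ((key x (v x) h).mp rfl).symm
end

section
/- For any X ∈ Xₙ (strictly upper-triangular with X² = 0), any invertible upper-triangular matrix b, and any i < j, the rank of the submatrix of bXb⁻¹ on rows i,…,n and columns 1,…,j equals the rank of the corresponding submatrix of X. -/
/-- The rank of the submatrix of `X` on rows `{i,…,n}` and columns `{1,…,j}`. -/
noncomputable def subRank {n : ℕ} (X : Matrix (Fin n) (Fin n) ℂ) (i j : Fin n) : ℕ :=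
  Matrix.rank (Matrix.of fun (a : {a : Fin n // i ≤ a}) (b : {b : Fin n // b ≤ j}) =>
    X a.1 b.1)

/-- The ranks of the southwestern submatrices `X_{ij}` are invariant under
conjugation by an invertible upper-triangular matrix. -/
theorem subRank_invariant_under_borel_conjugation (n : ℕ)
    (X b : Matrix (Fin n) (Fin n) ℂ)
    (hX : ∀ i j : Fin n, j ≤ i → X i j = 0)
    (hX2 : X * X = 0)
    (hb : ∀ i j : Fin n, j < i → b i j = 0)
    (hbunit : IsUnit b.det)
    (i j : Fin n) (hij : i < j) :
    subRank (b * X * b⁻¹) i j = subRank X i j := by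
  classical
  haveI : Invertible b := b.invertibleOfIsUnitDet hbunit
  set p : Fin n → Prop := fun a => i ≤ a with hp
  set q : Fin n → Prop := fun a => a ≤ j with hq
  -- b is upper triangular
  have hbt : Matrix.BlockTriangular b id := fun a c h => hb a c h
  have hbinvt : Matrix.BlockTriangular b⁻¹ id :=
    Matrix.blockTriangular_inv_of_blockTriangular hbt
  -- the key block decomposition
  have hzero1 : b.toBlock p (fun a => ¬ p a) = 0 := by
    ext a c
    exact hb a.1 c.1 (lt_of_lt_of_le (not_le.mp c.2) a.2)
  have hzero2 : (b⁻¹).toBlock (fun a => ¬ q a) q = 0 := by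
    ext a c
    exact hbinvt (lt_of_le_of_lt c.2 (not_le.mp a.2))
  have hblock : (b * X * b⁻¹).toBlock p q
      = b.toBlock p p * (X.toBlock p q * (b⁻¹).toBlock q q) := by
    rw [mul_assoc, Matrix.toBlock_mul_eq_add p p q b (X * b⁻¹), hzero1,
      Matrix.zero_mul, add_zero, Matrix.toBlock_mul_eq_add p q q X b⁻¹, hzero2,
      Matrix.mul_zero, add_zero]
  -- diagonal entries of b and b⁻¹ are nonzero
  have hdetb : b.det = ∏ a, b a a := Matrix.det_of_upperTriangular hbt
  have hdiag : ∀ a : Fin n, b a a ≠ 0 := by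
    intro a
    have hne : (∏ a, b a a) ≠ 0 := hdetb ▸ hbunit.ne_zero
    exact Finset.prod_ne_zero_iff.mp hne a (Finset.mem_univ a)
  have hdetbinv : (b⁻¹).det = ∏ a, b⁻¹ a a := Matrix.det_of_upperTriangular hbinvt
  have hbinvunit : IsUnit (b⁻¹).det := Matrix.isUnit_nonsing_inv_det b hbunit
  have hdiaginv : ∀ a : Fin n, b⁻¹ a a ≠ 0 := by
    intro a
    have hne : (∏ a, b⁻¹ a a) ≠ 0 := hdetbinv ▸ hbinvunit.ne_zero
    exact Finset.prod_ne_zero_iff.mp hne a (Finset.mem_univ a)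
  -- the blocks of b and b⁻¹ are invertible (unit determinant)
  have hP : IsUnit (b.toBlock p p).det := by
    have ht : Matrix.BlockTriangular (b.toBlock p p) id := by
      intro a c h
      exact hb a.1 c.1 (Subtype.coe_lt_coe.mpr h)
    rw [Matrix.det_of_upperTriangular ht]
    exact isUnit_iff_ne_zero.mpr
      (Finset.prod_ne_zero_iff.mpr fun a _ => hdiag a.1)
  have hQ : IsUnit ((b⁻¹).toBlock q q).det := by
    have ht : Matrix.BlockTriangular ((b⁻¹).toBlock q q) id := by
      intro a c h
      exact hbinvt (Subtype.coe_lt_coe.mpr h)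
    rw [Matrix.det_of_upperTriangular ht]
    exact isUnit_iff_ne_zero.mpr
      (Finset.prod_ne_zero_iff.mpr fun a _ => hdiaginv a.1)
  -- conclude
  show ((b * X * b⁻¹).toBlock p q).rank = (X.toBlock p q).rank
  rw [hblock, Matrix.rank_mul_eq_right_of_isUnit_det _ _ hP,
    Matrix.rank_mul_eq_left_of_isUnit_det _ _ hQ]
end

section
/- For an involutive permutation w of {1,…,n} with a arcs (2-cycles) and f fixed points, the quantity a·(a+f) minus the number of crossings is maximized, over all involutions of {1,…,n}, at value ⌊n²/4⌋, achieved exactly by crossingless involutions with ⌊n/2⌋ arcs. -/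
/-- The arcs (2-cycles) of an involution `w`. -/
def arcs {n : ℕ} (w : Equiv.Perm (Fin n)) : Finset (Fin n × Fin n) :=
  Finset.univ.filter (fun p : Fin n × Fin n => p.1 < p.2 ∧ w p.1 = p.2)

/-- The fixed points of `w`. -/
def fixedPts {n : ℕ} (w : Equiv.Perm (Fin n)) : Finset (Fin n) :=
  Finset.univ.filter (fun i => w i = i)

/-- Crossings: pairs of arcs `(i,j)`, `(k,l)` with `i < k < j < l`. -/
def crossings {n : ℕ} (w : Equiv.Perm (Fin n)) : Finset ((Fin n × Fin n) × (Fin n × Fin n)) :=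
  Finset.univ.filter (fun q : (Fin n × Fin n) × (Fin n × Fin n) =>
    q.1 ∈ arcs w ∧ q.2 ∈ arcs w ∧ q.1.1 < q.2.1 ∧ q.2.1 < q.1.2 ∧ q.1.2 < q.2.2)

/-- The dimension of the orbit `B·w_<`:
`#arcs·(#arcs + #half-lines) − #crossings`. -/
def dimOrbit {n : ℕ} (w : Equiv.Perm (Fin n)) : ℕ :=
  (arcs w).card * ((arcs w).card + (fixedPts w).card) - (crossings w).card

lemma two_arcs_add_fixed {n : ℕ} (w : Equiv.Perm (Fin n)) (hw : Function.Involutive w) :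
    2 * (arcs w).card + (fixedPts w).card = n := by
  classical
  set S : Finset (Fin n) := Finset.univ.filter (fun i => ¬ w i = i) with hS
  set T : Finset (Fin n × Fin n) :=
    Finset.univ.filter (fun p : Fin n × Fin n => w p.1 = p.2 ∧ p.1 ≠ p.2) with hT
  have h1 : (fixedPts w).card + S.card = n := by
    rw [fixedPts, hS, Finset.card_filter_add_card_filter_not, Finset.card_univ,
      Fintype.card_fin]
  have h2 : S.card = T.card := by
    apply Finset.card_bij (fun i _ => (i, w i))
    · intro a ha
      simp only [hS, hT, Finset.mem_filter, Finset.mem_univ, true_and] at ha ⊢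
      exact fun h => ha h.symm
    · intro a₁ h₁ a₂ h₂ h
      exact congrArg Prod.fst h
    · intro b hb
      simp only [hT, Finset.mem_filter, Finset.mem_univ, true_and] at hb
      refine ⟨b.1, ?_, ?_⟩
      · simp only [hS, Finset.mem_filter, Finset.mem_univ, true_and]
        rw [hb.1]; exact hb.2.symm
      · exact Prod.ext rfl hb.1
  have h3 : T.filter (fun p => p.1 < p.2) = arcs w := by
    ext p
    simp only [hT, arcs, Finset.mem_filter, Finset.mem_univ, true_and]
    constructor
    · rintro ⟨⟨h1, h2⟩, h3⟩; exact ⟨h3, h1⟩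
    · rintro ⟨h1, h2⟩; exact ⟨⟨h2, h1.ne⟩, h1⟩
  have h4 : (T.filter (fun p => ¬ p.1 < p.2)).card = (arcs w).card := by
    apply Finset.card_bij (fun p _ => (p.2, p.1))
    · intro p hp
      simp only [hT, Finset.mem_filter, Finset.mem_univ, true_and] at hp
      obtain ⟨⟨hw1, hne⟩, hnlt⟩ := hp
      simp only [arcs, Finset.mem_filter, Finset.mem_univ, true_and]
      refine ⟨lt_of_le_of_ne (not_lt.mp hnlt) hne.symm, ?_⟩
      rw [← hw1, hw]
    · intro a₁ h₁ a₂ h₂ h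
      have := congrArg Prod.fst h
      have := congrArg Prod.snd h
      exact Prod.ext ‹(a₁.2, a₁.1).snd = (a₂.2, a₂.1).snd› ‹(a₁.2, a₁.1).fst = (a₂.2, a₂.1).fst›
    · intro b hb
      simp only [arcs, Finset.mem_filter, Finset.mem_univ, true_and] at hb
      refine ⟨(b.2, b.1), ?_, rfl⟩
      simp only [hT, Finset.mem_filter, Finset.mem_univ, true_and]
      exact ⟨⟨by rw [← hb.2, hw], hb.1.ne'⟩, not_lt.mpr hb.1.le⟩
  have h5 : T.card = (arcs w).card + (arcs w).card := by
    rw [← Finset.card_filter_add_card_filter_not (s := T) (p := fun p => p.1 < p.2),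
      h3, h4]
  omega

lemma crossings_card_le {n : ℕ} (w : Equiv.Perm (Fin n)) :
    (crossings w).card ≤ (arcs w).card * (arcs w).card := by
  classical
  have hsub : crossings w ⊆ (arcs w) ×ˢ (arcs w) := by
    intro q hq
    simp only [crossings, Finset.mem_filter, Finset.mem_univ, true_and] at hq
    simp only [Finset.mem_product]
    exact ⟨hq.1, hq.2.1⟩
  calc (crossings w).card ≤ ((arcs w) ×ˢ (arcs w)).card := Finset.card_le_card hsub
    _ = _ := by rw [Finset.card_product]

/-- helper function for the explicit crossingless involution -/
def pf (n m : ℕ) : ℕ := if m % 2 = 0 then (if m + 1 < n then m + 1 else m) else m - 1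

lemma pf_lt {n m : ℕ} (h : m < n) : pf n m < n := by unfold pf; split_ifs <;> omega

lemma pf_invol {n m : ℕ} (h : m < n) : pf n (pf n m) = m := by
  unfold pf; split_ifs <;> omega

/-- the explicit crossingless involution pairing `2k ↔ 2k+1` -/
def pairFun (n : ℕ) (i : Fin n) : Fin n := ⟨pf n i, pf_lt i.isLt⟩

lemma pairFun_invol (n : ℕ) : Function.Involutive (pairFun n) := by
  intro i
  apply Fin.ext
  exact pf_invol i.isLt

lemma key_div (a f n : ℕ) (h : 2 * a + f = n) :
    n ^ 2 / 4 = a * (a + f) + f ^ 2 / 4 := by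
  have h2 : n ^ 2 = 4 * (a * (a + f)) + f ^ 2 := by subst h; ring
  rw [h2, Nat.mul_add_div (by norm_num)]

/-- The maximal value of `dimOrbit` over involutions of `{1,…,n}` is `⌊n²/4⌋`,
achieved exactly at crossingless involutions with `⌊n/2⌋` arcs. -/
theorem dimOrbit_max (n : ℕ) :
    (∀ w : Equiv.Perm (Fin n), Function.Involutive w → dimOrbit w ≤ n ^ 2 / 4) ∧
    (∃ w : Equiv.Perm (Fin n), Function.Involutive w ∧ dimOrbit w = n ^ 2 / 4) ∧
    (∀ w : Equiv.Perm (Fin n), Function.Involutive w →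
      (dimOrbit w = n ^ 2 / 4 ↔ (crossings w).card = 0 ∧ (arcs w).card = n / 2)) := by
  classical
  -- general facts
  have hub : ∀ w : Equiv.Perm (Fin n), Function.Involutive w → dimOrbit w ≤ n ^ 2 / 4 := by
    intro w hw
    have h := two_arcs_add_fixed w hw
    have hk := key_div _ _ _ h
    have hdim : dimOrbit w =
        (arcs w).card * ((arcs w).card + (fixedPts w).card) - (crossings w).card := rfl
    omega
  have hiff : ∀ w : Equiv.Perm (Fin n), Function.Involutive w →
      (dimOrbit w = n ^ 2 / 4 ↔ (crossings w).card = 0 ∧ (arcs w).card = n / 2) := by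
    intro w hw
    have h := two_arcs_add_fixed w hw
    have hk := key_div _ _ _ h
    have hc := crossings_card_le w
    have hdim : dimOrbit w =
        (arcs w).card * ((arcs w).card + (fixedPts w).card) - (crossings w).card := rfl
    set a := (arcs w).card with hadef
    set f := (fixedPts w).card with hfdef
    set c := (crossings w).card with hcdef
    constructor
    · intro hd
      -- from hd : a*(a+f) - c = n^2/4 = a*(a+f) + f^2/4
      have hf0 : f ^ 2 / 4 = 0 ∧ (c = 0 ∨ a * (a + f) = 0) := by omega
      have hf1 : f ≤ 1 := by
        rcases Nat.lt_or_ge f 2 with h' | h'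
        · omega
        · exfalso
          have : 2 ^ 2 ≤ f ^ 2 := Nat.pow_le_pow_left h' 2
          omega
      have ha : a = n / 2 := by omega
      rcases hf0.2 with hc0 | hX
      · exact ⟨hc0, ha⟩
      · have : a = 0 := by
          rcases Nat.mul_eq_zero.mp hX with h' | h' <;> omega
        refine ⟨?_, ha⟩
        have h0 : a * a = 0 := by simp [this]
        omega
    · rintro ⟨hc0, ha⟩
      have hf1 : f ≤ 1 := by omega
      have : f ^ 2 / 4 = 0 := by
        have : f ^ 2 ≤ 1 := by
          calc f ^ 2 ≤ 1 ^ 2 := Nat.pow_le_pow_left hf1 2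
            _ = 1 := by norm_num
        omega
      omega
  refine ⟨hub, ?_, hiff⟩
  -- existence: the pairing involution
  set w := Function.Involutive.toPerm (pairFun n) (pairFun_invol n) with hwdef
  have hwi : Function.Involutive w := pairFun_invol n
  have hwcoe : ∀ i, w i = pairFun n i := fun i => rfl
  have harc : ∀ p : Fin n × Fin n, p ∈ arcs w → (p.2 : ℕ) = (p.1 : ℕ) + 1 := by
    intro p hp
    simp only [arcs, Finset.mem_filter, Finset.mem_univ, true_and] at hp
    obtain ⟨hlt, heq⟩ := hp
    have h1 : (p.2 : ℕ) = pf n p.1 := by rw [← heq, hwcoe]; rfl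
    have h2 : (p.1 : ℕ) < (p.2 : ℕ) := hlt
    unfold pf at h1
    split_ifs at h1 <;> omega
  have hcross : (crossings w).card = 0 := by
    rw [Finset.card_eq_zero]
    ext q
    simp only [crossings, Finset.mem_filter, Finset.mem_univ, true_and,
      Finset.notMem_empty, iff_false]
    rintro ⟨h1, h2, h3, h4, h5⟩
    have e1 := harc _ h1
    have l3 : (q.1.1 : ℕ) < (q.2.1 : ℕ) := h3
    have l4 : (q.2.1 : ℕ) < (q.1.2 : ℕ) := h4
    omega
  have hfix : (fixedPts w).card = n % 2 := by
    have hchar : ∀ i : Fin n, (w i = i ↔ ((i : ℕ) % 2 = 0 ∧ n ≤ (i : ℕ) + 1)) := by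
      intro i
      rw [hwcoe]
      constructor
      · intro hh
        have hpf : pf n (i : ℕ) = (i : ℕ) := congrArg Fin.val hh
        have hlt := i.isLt
        unfold pf at hpf
        split_ifs at hpf <;> omega
      · intro ⟨h1, h2⟩
        apply Fin.ext
        show pf n (i : ℕ) = (i : ℕ)
        unfold pf
        split_ifs <;> omega
    rcases Nat.even_or_odd n with he | ho
    · have : fixedPts w = ∅ := by
        ext i
        simp only [fixedPts, Finset.mem_filter, Finset.mem_univ, true_and,
          Finset.notMem_empty, iff_false]
        rw [hchar]
        have := i.isLt
        obtain ⟨k, hk⟩ := he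
        omega
      rw [this, Finset.card_empty]
      obtain ⟨k, hk⟩ := he
      omega
    · obtain ⟨k, hk⟩ := ho
      have hn1 : n - 1 < n := by omega
      have : fixedPts w = {(⟨n - 1, hn1⟩ : Fin n)} := by
        ext i
        simp only [fixedPts, Finset.mem_filter, Finset.mem_univ, true_and,
          Finset.mem_singleton]
        rw [hchar, Fin.ext_iff]
        have := i.isLt
        simp only [Fin.val_mk]
        omega
      rw [this, Finset.card_singleton]
      omega
  have harcn : (arcs w).card = n / 2 := by
    have := two_arcs_add_fixed w hwi
    omega
  exact ⟨w, hwi, (hiff w hwi).mpr ⟨hcross, harcn⟩⟩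
end

section
/- Adding to a strictly upper-triangular square-zero matrix X a multiple of column j' to column j with j' < j, or a multiple of row i' to row i with i' < i, does not change the rank of any submatrix X_{ij} on rows {i,…,n} and columns {1,…,j}. -/
/-- Multiplying a strictly upper-triangular square-zero matrix `X` on the left
and on the right by unipotent upper-triangular matrices (i.e. adding multiples
of earlier columns to later columns and of later rows to earlier rows) does not
change the ranks of the southwestern submatrices `X_{ij}`. -/
theorem subRank_invariant_unipotent (n : ℕ)
    (X u u' : Matrix (Fin n) (Fin n) ℂ)
    (hX : ∀ i j : Fin n, j ≤ i → X i j = 0)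
    (hX2 : X * X = 0)
    (hu : ∀ i j : Fin n, j < i → u i j = 0) (hu1 : ∀ i : Fin n, u i i = 1)
    (hu' : ∀ i j : Fin n, j < i → u' i j = 0) (hu'1 : ∀ i : Fin n, u' i i = 1)
    (i j : Fin n) :
    subRank (u * X * u') i j = subRank X i j := by
  classical
  set R : Type := {a : Fin n // i ≤ a}
  set C : Type := {b : Fin n // b ≤ j}
  let U : Matrix R R ℂ := Matrix.of fun a b => u a.1 b.1
  let U' : Matrix C C ℂ := Matrix.of fun a b => u' a.1 b.1
  let Xs : Matrix R C ℂ := Matrix.of fun a b => X a.1 b.1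
  have key : (Matrix.of fun (a : R) (b : C) => (u * X * u') a.1 b.1) = U * Xs * U' := by
    ext a b
    simp only [Matrix.of_apply, Matrix.mul_apply, U, U', Xs]
    calc (∑ c : Fin n, (∑ d : Fin n, u a.1 d * X d c) * u' c b.1)
        = ∑ d : Fin n, u a.1 d * (∑ c : Fin n, X d c * u' c b.1) := by
          simp only [Finset.sum_mul, Finset.mul_sum, mul_assoc]
          rw [Finset.sum_comm]
      _ = ∑ d : R, u a.1 d.1 * (∑ c : Fin n, X d.1 c * u' c b.1) := by
          rw [← Finset.sum_subtype (Finset.univ.filter (fun x : Fin n => i ≤ x))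
            (by simp) (fun d => u a.1 d * (∑ c : Fin n, X d c * u' c b.1))]
          rw [Finset.sum_filter_of_ne]
          intro x _ hx
          by_contra hix
          exact hx (by rw [hu a.1 x (lt_of_lt_of_le (lt_of_not_ge hix) a.2), zero_mul])
      _ = ∑ d : R, u a.1 d.1 * (∑ c : C, X d.1 c.1 * u' c.1 b.1) := by
          refine Finset.sum_congr rfl fun d _ => ?_
          congr 1
          rw [← Finset.sum_subtype (Finset.univ.filter (fun x : Fin n => x ≤ j))
            (by simp) (fun c => X d.1 c * u' c b.1)]
          rw [Finset.sum_filter_of_ne]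
          intro x _ hx
          by_contra hxj
          exact hx (by rw [hu' x b.1 (lt_of_le_of_lt b.2 (lt_of_not_ge hxj)), mul_zero])
      _ = ∑ c : C, (∑ d : R, u a.1 d.1 * X d.1 c.1) * u' c.1 b.1 := by
          simp only [Finset.sum_mul, Finset.mul_sum, mul_assoc]
          rw [Finset.sum_comm]
  unfold subRank
  rw [key]
  have hdetU : IsUnit U.det := by
    have : U.det = 1 := by
      rw [Matrix.det_of_upperTriangular]
      · simp [U, hu1]
      · intro a b hab
        exact hu a.1 b.1 (Subtype.coe_lt_coe.mpr hab)
    simp [this]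
  have hdetU' : IsUnit U'.det := by
    have : U'.det = 1 := by
      rw [Matrix.det_of_upperTriangular]
      · simp [U', hu'1]
      · intro a b hab
        exact hu' a.1 b.1 (Subtype.coe_lt_coe.mpr hab)
    simp [this]
  rw [Matrix.rank_mul_eq_left_of_isUnit_det U' (U * Xs) hdetU',
    Matrix.rank_mul_eq_right_of_isUnit_det U Xs hdetU]
end

section
/- Let s ∈ {0,1,2}ⁿ and let w, v be s-consistent involutions. If r_{ij}(v) ≤ r_{ij}(w) for all i < j with s_i = 0 and s_j = 2, then r_{ij}(v) ≤ r_{ij}(w) for all pairs i < j. -/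
/-- Consistency with a string `s ∈ {0,1,2}ⁿ`. -/
def Consistent {n : ℕ} (s : Fin n → Fin 3) (w : Equiv.Perm (Fin n)) : Prop :=
  ∀ i j : Fin n, i < j → w i = j → s i = 0 ∧ s j = 2

lemma rij_mono {n : ℕ} (w : Equiv.Perm (Fin n)) {i i' j j' : Fin n}
    (h1 : i ≤ i') (h2 : j' ≤ j) : rij w i' j' ≤ rij w i j := by
  apply Finset.card_le_card
  intro p hp
  simp only [Finset.mem_filter, Finset.mem_univ, true_and] at hp ⊢
  exact ⟨le_trans h1 hp.1, hp.2.1, le_trans hp.2.2.1 h2, hp.2.2.2⟩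

/-- For `s`-consistent involutions, the rank inequalities at black–white pairs
(`s i = 0`, `s j = 2`) imply the rank inequalities at all pairs `i < j`. -/
theorem rank_ineq_reduction (n : ℕ) (s : Fin n → Fin 3)
    (v w : Equiv.Perm (Fin n))
    (hv : Function.Involutive v) (hw : Function.Involutive w)
    (hvc : Consistent s v) (hwc : Consistent s w)
    (h : ∀ i j : Fin n, i < j → s i = 0 → s j = 2 → rij v i j ≤ rij w i j) :
    ∀ i j : Fin n, i < j → rij v i j ≤ rij w i j := by
  intro i j hij
  by_cases hz : rij v i j = 0
  · omega
  · -- the filter set is nonempty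
    have hne : (Finset.univ.filter (fun p : Fin n × Fin n =>
        i ≤ p.1 ∧ p.1 < p.2 ∧ p.2 ≤ j ∧ v p.1 = p.2)).Nonempty := by
      rw [← Finset.card_pos]
      exact Nat.pos_of_ne_zero hz
    obtain ⟨p, hp⟩ := hne
    simp only [Finset.mem_filter, Finset.mem_univ, true_and] at hp
    obtain ⟨hpa, hpab, hpb, hpv⟩ := hp
    obtain ⟨hsa, hsb⟩ := hvc p.1 p.2 hpab hpv
    set A := Finset.univ.filter (fun x : Fin n => i ≤ x ∧ x ≤ j ∧ s x = 0) with hA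
    set B := Finset.univ.filter (fun x : Fin n => i ≤ x ∧ x ≤ j ∧ s x = 2) with hB
    have hAne : A.Nonempty := ⟨p.1, by simp [hA, hpa, le_trans (le_of_lt hpab) hpb, hsa]⟩
    have hBne : B.Nonempty := ⟨p.2, by simp [hB, hpb, le_trans hpa (le_of_lt hpab), hsb]⟩
    set i' := A.min' hAne with hi'
    set j' := B.max' hBne with hj'
    have hi'mem : i' ∈ A := Finset.min'_mem _ _
    have hj'mem : j' ∈ B := Finset.max'_mem _ _
    simp only [hA, hB, Finset.mem_filter, Finset.mem_univ, true_and] at hi'mem hj'mem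
    have hi'le : i' ≤ p.1 := Finset.min'_le _ _ (by
      simp [hA, hpa, le_trans (le_of_lt hpab) hpb, hsa])
    have hj'ge : p.2 ≤ j' := Finset.le_max' _ _ (by
      simp [hB, hpb, le_trans hpa (le_of_lt hpab), hsb])
    have hij' : i' < j' := lt_of_le_of_lt hi'le (lt_of_lt_of_le hpab hj'ge)
    have heq : rij v i j = rij v i' j' := by
      unfold rij
      congr 1
      apply Finset.filter_congr
      intro q _
      constructor
      · rintro ⟨h1, h2, h3, h4⟩
        obtain ⟨hs1, hs2⟩ := hvc q.1 q.2 h2 h4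
        refine ⟨Finset.min'_le _ _ (by simp [hA, h1, le_trans (le_of_lt h2) h3, hs1]),
          h2, Finset.le_max' _ _ (by simp [hB, h3, le_trans h1 (le_of_lt h2), hs2]), h4⟩
      · rintro ⟨h1, h2, h3, h4⟩
        exact ⟨le_trans hi'mem.1 h1, h2, le_trans h3 hj'mem.2.1, h4⟩
    calc rij v i j = rij v i' j' := heq
      _ ≤ rij w i' j' := h i' j' hij' hi'mem.2.2 hj'mem.2.2
      _ ≤ rij w i j := rij_mono w hi'mem.1 hj'mem.2.1
end
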